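/- Let τ > 0 and λ ∈ ℂ with Re λ < 0. Then the Laguerre coefficients for α = 0 satisfy the recursion s_{0,τ,0,λ} = −2√τ/(2λ−τ) and s_{n+1,τ,0,λ} = ((2λ+τ)/(2λ−τ)) · s_{n,τ,0,λ} for all n ∈ ℕ. -/

import Mathlib

/-!
With `w = λ - τ/2` (so `Re w < 0`), expanding `L_n(τt)` turns `s_n` into a combination of the
moments `∫₀^∞ t^k e^{wt} dt = k!/(-w)^{k+1}`, which follow by induction from integrating the
derivative of `t^{k+1} e^{wt}` over `(0, ∞)`. The factor `k!` cancels against the Laguerre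
coefficient and the binomial theorem gives the closed form `s_n = -(√τ/w) ((w+τ)/w)^n`: a
geometric sequence with ratio `(w+τ)/w = (2λ+τ)/(2λ-τ)`.
-/

open MeasureTheory

/-- The (ordinary) Laguerre polynomial `L_n(t) = ∑_{k=0}^n (-1)^k (n!/((k!)²(n-k)!)) t^k`. -/
noncomputable def ordLagPoly (n : ℕ) (t : ℝ) : ℝ :=
  ∑ k ∈ Finset.range (n + 1),
    (-1 : ℝ) ^ k * ((n.factorial : ℝ) / ((k.factorial : ℝ) ^ 2 * (n - k).factorial)) * t ^ k

/-- The Laguerre function `l_{n,τ}(t) = √τ e^{-τt/2} L_n(τt)`. -/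
noncomputable def ordLagFun (τ : ℝ) (n : ℕ) (t : ℝ) : ℝ :=
  Real.sqrt τ * Real.exp (-τ * t / 2) * ordLagPoly n (τ * t)

/-- The Laguerre coefficient `s_{n,τ,0,λ} = ∫₀^∞ e^{λ t} l_{n,τ}(t) dt`. -/
noncomputable def ordLagCoef (τ : ℝ) (n : ℕ) (z : ℂ) : ℂ :=
  ∫ t in Set.Ioi (0 : ℝ), Complex.exp (z * t) * (ordLagFun τ n t : ℂ)

open Set Filter Topology

section PowMulCexp

variable {w : ℂ}

lemma norm_ofReal_pow_mul_cexp (m : ℕ) (w : ℂ) {x : ℝ} (hx : 0 ≤ x) :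
    ‖(x : ℂ) ^ m * Complex.exp (w * x)‖ = x ^ m * Real.exp (w.re * x) := by
  rw [norm_mul, norm_pow, Complex.norm_exp, Complex.norm_real, Real.norm_of_nonneg hx,
    Complex.re_mul_ofReal]

lemma tendsto_ofReal_pow_mul_cexp_atTop (m : ℕ) (hw : w.re < 0) :
    Tendsto (fun x : ℝ => (x : ℂ) ^ m * Complex.exp (w * x)) atTop (𝓝 0) := by
  rw [tendsto_zero_iff_norm_tendsto_zero]
  refine (tendsto_rpow_mul_exp_neg_mul_atTop_nhds_zero m (-w.re) (by linarith)).congr' ?_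
  filter_upwards [eventually_ge_atTop 0] with x hx
  rw [norm_ofReal_pow_mul_cexp m w hx, Real.rpow_natCast, neg_neg]

lemma integrableOn_ofReal_pow_mul_cexp_Ioi (m : ℕ) (hw : w.re < 0) :
    IntegrableOn (fun x : ℝ => (x : ℂ) ^ m * Complex.exp (w * x)) (Ioi 0) := by
  have hreal : IntegrableOn (fun x : ℝ => x ^ m * Real.exp (w.re * x)) (Ioi 0) := by
    refine (integrableOn_rpow_mul_exp_neg_mul_rpow (p := 1) (s := m) (b := -w.re)
      (by linarith [m.cast_nonneg (α := ℝ)]) one_pos (by linarith)).congr_fun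
      (fun x _ => ?_) measurableSet_Ioi
    simp only [Real.rpow_natCast, Real.rpow_one, neg_neg]
  refine hreal.mono' (by fun_prop) ?_
  filter_upwards [ae_restrict_mem measurableSet_Ioi] with x hx
  exact (norm_ofReal_pow_mul_cexp m w (le_of_lt hx)).le

lemma hasDerivAt_ofReal_pow_succ_mul_cexp (m : ℕ) (w : ℂ) (x : ℝ) :
    HasDerivAt (fun y : ℝ => (y : ℂ) ^ (m + 1) * Complex.exp (w * y))
      ((m + 1) * ((x : ℂ) ^ m * Complex.exp (w * x))
        + w * ((x : ℂ) ^ (m + 1) * Complex.exp (w * x))) x := by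
  have hpow := (hasDerivAt_pow (m + 1) (x : ℂ)).comp_ofReal
  have hexp := (((hasDerivAt_id (x : ℂ)).const_mul w).cexp).comp_ofReal
  refine (hpow.fun_mul hexp).congr_deriv ?_
  simp only [id, Nat.add_sub_cancel, mul_one]
  push_cast
  ring

lemma integral_ofReal_pow_mul_cexp_Ioi (m : ℕ) (hw : w.re < 0) :
    ∫ x in Ioi (0 : ℝ), (x : ℂ) ^ m * Complex.exp (w * x) = m.factorial / (-w) ^ (m + 1) := by
  have hw0 : w ≠ 0 := by rintro rfl; simp at hw
  induction m with
  | zero => simpa [neg_div, div_neg] using integral_exp_mul_complex_Ioi hw 0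
  | succ m ih =>
    have hFTC := integral_Ioi_of_hasDerivAt_of_tendsto' (a := 0)
      (fun x _ => hasDerivAt_ofReal_pow_succ_mul_cexp m w x)
      (((integrableOn_ofReal_pow_mul_cexp_Ioi m hw).const_mul _).add
        ((integrableOn_ofReal_pow_mul_cexp_Ioi (m + 1) hw).const_mul _))
      (tendsto_ofReal_pow_mul_cexp_atTop (m + 1) hw)
    rw [integral_add ((integrableOn_ofReal_pow_mul_cexp_Ioi m hw).const_mul _)
        ((integrableOn_ofReal_pow_mul_cexp_Ioi (m + 1) hw).const_mul _),
      integral_const_mul, integral_const_mul, ih] at hFTC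
    simp only [Complex.ofReal_zero, zero_pow m.succ_ne_zero, zero_mul, sub_zero] at hFTC
    rw [Nat.factorial_succ, Nat.cast_mul, pow_succ]
    field_simp
    push_cast
    linear_combination hFTC

end PowMulCexp

lemma sum_laguerre_coeff_mul_moment (n : ℕ) {τ w : ℂ} (hw : w ≠ 0) :
    ∑ k ∈ Finset.range (n + 1), (-1) ^ k * ((n.factorial : ℂ) /
        ((k.factorial : ℂ) ^ 2 * (n - k).factorial)) * τ ^ k * (k.factorial / (-w) ^ (k + 1))
      = -((w + τ) / w) ^ n / w := by
  rw [show (w + τ) / w = τ / w + 1 by field_simp; ring, add_pow, neg_div, Finset.sum_div,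
    ← Finset.sum_neg_distrib]
  refine Finset.sum_congr rfl fun k hk => ?_
  have hkn : k ≤ n := Nat.lt_succ_iff.mp (Finset.mem_range.mp hk)
  have hsign : (-w) ^ (k + 1) = -((-1) ^ k * w ^ (k + 1)) := by ring
  have hsign0 : ((-1 : ℂ) ^ k) ≠ 0 := pow_ne_zero _ (by norm_num)
  rw [Nat.cast_choose ℂ hkn, hsign, one_pow, div_pow]
  field_simp
  ring

lemma cexp_mul_ordLagFun (τ : ℝ) (n : ℕ) (z : ℂ) (t : ℝ) :
    Complex.exp (z * t) * (ordLagFun τ n t : ℂ)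
      = (Real.sqrt τ : ℂ) * ∑ k ∈ Finset.range (n + 1), (-1 : ℂ) ^ k * ((n.factorial : ℂ) /
          ((k.factorial : ℂ) ^ 2 * (n - k).factorial)) * (τ : ℂ) ^ k
          * ((t : ℂ) ^ k * Complex.exp ((z - τ / 2) * t)) := by
  have hexp : Complex.exp ((z - τ / 2) * t) = Complex.exp (z * t) * Complex.exp (-τ * t / 2) := by
    rw [← Complex.exp_add]; ring_nf
  simp only [ordLagFun, ordLagPoly, hexp, Finset.mul_sum]
  push_cast
  rw [Finset.mul_sum]
  refine Finset.sum_congr rfl fun k _ => ?_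
  ring

lemma ordLagCoef_eq {τ : ℝ} (hτ : 0 ≤ τ) {z : ℂ} (hz : z.re < 0) (n : ℕ) :
    ordLagCoef τ n z = -2 * (Real.sqrt τ : ℂ) / (2 * z - τ) * ((2 * z + τ) / (2 * z - τ)) ^ n := by
  set w := z - τ / 2
  have hw : w.re < 0 := by
    simp only [w, Complex.sub_re, Complex.div_ofNat_re, Complex.ofReal_re]
    linarith
  have hw0 : w ≠ 0 := by rintro h; simp [h] at hw
  have hint k : IntegrableOn (fun t : ℝ => (t : ℂ) ^ k * Complex.exp (w * t)) (Ioi 0) :=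
    integrableOn_ofReal_pow_mul_cexp_Ioi k hw
  simp_rw [ordLagCoef, cexp_mul_ordLagFun, integral_const_mul]
  rw [integral_finsetSum _ fun k _ => (hint k).const_mul _]
  simp_rw [integral_const_mul, integral_ofReal_pow_mul_cexp_Ioi _ hw,
    sum_laguerre_coeff_mul_moment n hw0]
  rw [show 2 * z - τ = 2 * w by ring, show 2 * z + τ = 2 * (w + τ) by ring,
    mul_div_mul_left _ _ two_ne_zero]
  field_simp

theorem ordLagCoef_recursion (τ : ℝ) (hτ : 0 < τ) (z : ℂ) (hz : z.re < 0) :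
    ordLagCoef τ 0 z = -2 * (Real.sqrt τ : ℂ) / (2 * z - τ) ∧
      ∀ n : ℕ, ordLagCoef τ (n + 1) z =
        (2 * z + τ) / (2 * z - τ) * ordLagCoef τ n z := by
  refine ⟨by rw [ordLagCoef_eq hτ.le hz, pow_zero, mul_one], fun n => ?_⟩
  rw [ordLagCoef_eq hτ.le hz, ordLagCoef_eq hτ.le hz, pow_succ]
  ring
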